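/- Let q be a real number with q > 0 and q ≠ 1. Define operators r_x, r_y on ℂ[x,y] by r_x(x^n y^m) = q^{2m} x^{n+1} y^m and r_y(x^n y^m) = x^n y^{m+1} (right multiplication by x, resp. y, in the quantum plane yx = q²xy, written in ordered monomials). Then their adjoints with respect to the q-Fischer inner product on ℂ[x,y] are given, for all u ∈ ℂ[x,y], f ∈ ℂ[x], g ∈ ℂ[y], by ⟨r_x(u), f(x)g(y)⟩ = ⟨u, (D_{q²}f)(x) · g(q²y)⟩ and ⟨r_y(u), f(x)g(y)⟩ = ⟨u, f(x) · (D_{q²}g)(y)⟩; i.e. r_x†(f ⊗ g) = D_{q²}f ⊗ T_{q²}g and r_y†(f ⊗ g) = f ⊗ D_{q²}g. -/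

import Mathlib

noncomputable section

open Finset

/-- The q-number [x] = (q^x − q^{−x})/(q − q⁻¹) for real q > 0 and x ∈ ℝ. -/
def qnumR (q x : ℝ) : ℝ := (q ^ x - q ^ (-x)) / (q - q⁻¹)

/-- [x]_n = ∏_{s=0}^{n−1}[x+s]. -/
def qpochR (q x : ℝ) (n : ℕ) : ℝ := ∏ s ∈ Finset.range n, qnumR q (x + s)

/-- [n]! = [1]_n. -/
def qfactR (q : ℝ) (n : ℕ) : ℝ := ∏ s ∈ Finset.range n, qnumR q ((s : ℝ) + 1)

/-- [n choose k] = [n]!/([k]![n−k]!). -/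
def qbinomR (q : ℝ) (n k : ℕ) : ℝ := qfactR q n / (qfactR q k * qfactR q (n - k))

/-- ℂ[z] with basis the monomials z^m (with its convolution product). -/
abbrev P1 : Type := AddMonoidAlgebra ℂ ℕ

/-- ℂ[x] ⊗ ℂ[y] with basis the monomials x^k y^l. -/
abbrev P2 : Type := (ℕ × ℕ) →₀ ℂ

def mono (k l : ℕ) : P2 := Finsupp.single (k, l) 1

/-- q-Fischer inner product on ℂ[z]: ⟨z^n, z^m⟩ = δ_{n,m} q^{n(n−1)/2}[n]!. -/
def ip1 (q : ℝ) (P Q : P1) : ℂ :=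
  Finsupp.sum P.coeff fun m c =>
    c * (starRingEnd ℂ) (Q.coeff m) * ((q : ℂ) ^ (m * (m - 1) / 2) * (qfactR q m : ℂ))

/-- q-Fischer inner product on ℂ[x]⊗ℂ[y]:
⟨x^a y^b, x^c y^d⟩ = δ_{a,c} δ_{b,d} q^{a(a−1)/2+b(b−1)/2}[a]![b]!. -/
def ip2 (q : ℝ) (P Q : P2) : ℂ :=
  Finsupp.sum P fun ab c =>
    c * (starRingEnd ℂ) (Q ab) *
      ((q : ℂ) ^ (ab.1 * (ab.1 - 1) / 2 + ab.2 * (ab.2 - 1) / 2)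
        * (qfactR q ab.1 : ℂ) * (qfactR q ab.2 : ℂ))

/-- The element f(x)g(y) of ℂ[x]⊗ℂ[y]. -/
def fg (f g : P1) : P2 :=
  Finsupp.sum f.coeff fun a ca => Finsupp.sum g.coeff fun b cb => Finsupp.single (a, b) (ca * cb)

/-- The q-derivative D_{q²}, with D_{q²} z^m = q^{m−1}[m] z^{m−1}. -/
def Dq (q : ℝ) : P1 →ₗ[ℂ] P1 :=
  (Finsupp.lsum ℂ fun (m : ℕ) => LinearMap.toSpanSingleton ℂ P1
    (((q ^ (m - 1) * qnumR q m : ℝ) : ℂ) • (AddMonoidAlgebra.single (m - 1) 1 : P1))) ∘ₗ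
    (AddMonoidAlgebra.coeffLinearEquiv ℂ).toLinearMap

/-- The scaling operator h(z) ↦ h(c·z). -/
def scP (c : ℂ) : P1 →ₗ[ℂ] P1 :=
  (Finsupp.lsum ℂ fun (m : ℕ) => LinearMap.toSpanSingleton ℂ P1
    ((c ^ m) • (AddMonoidAlgebra.single m 1 : P1))) ∘ₗ
    (AddMonoidAlgebra.coeffLinearEquiv ℂ).toLinearMap

/-- Right multiplication by x in the quantum plane, in ordered monomials:
r_x(x^n y^m) = q^{2m} x^{n+1} y^m. -/
def rx (q : ℝ) : P2 →ₗ[ℂ] P2 :=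
  Finsupp.lsum ℂ fun nm => LinearMap.toSpanSingleton ℂ P2
    ((((q ^ (2 * nm.2) : ℝ)) : ℂ) • mono (nm.1 + 1) nm.2)

/-- Right multiplication by y in the quantum plane: r_y(x^n y^m) = x^n y^{m+1}. -/
def ry : P2 →ₗ[ℂ] P2 :=
  Finsupp.lsum ℂ fun nm => LinearMap.toSpanSingleton ℂ P2 (mono nm.1 (nm.2 + 1))

/-!
The q-Fischer product is diagonal in the monomial basis, with weight
w(a, b) = q^{a(a-1)/2 + b(b-1)/2} [a]! [b]!. Both r_x and r_y send a monomial to a multiple of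
the next one, and the weight ratios w(n+1, m) / w(n, m) = q^n [n+1] and
w(n, m+1) / w(n, m) = q^m [m+1] are exactly the coefficients by which D_{q²} lowers x^{n+1}
and y^{m+1}; the extra factor q^{2m} of r_x is the coefficient of T_{q²} on y^m.
So both identities are a term-by-term comparison over the monomials of u.
-/

def fischerWeight (q : ℝ) (p : ℕ × ℕ) : ℂ :=
  (q : ℂ) ^ (p.1 * (p.1 - 1) / 2 + p.2 * (p.2 - 1) / 2) * (qfactR q p.1 : ℂ) * (qfactR q p.2 : ℂ)

lemma qfactR_succ (q : ℝ) (n : ℕ) : qfactR q (n + 1) = qfactR q n * qnumR q ((n : ℝ) + 1) := by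
  rw [qfactR, qfactR, Finset.prod_range_succ]

lemma fischerWeight_succ_fst (q : ℝ) (n m : ℕ) :
    fischerWeight q (n + 1, m) = ((q ^ n * qnumR q ((n : ℝ) + 1) : ℝ) : ℂ) * fischerWeight q (n, m) := by
  simp only [fischerWeight, Nat.triangle_succ, qfactR_succ]
  push_cast
  ring

lemma fischerWeight_succ_snd (q : ℝ) (n m : ℕ) :
    fischerWeight q (n, m + 1) = ((q ^ m * qnumR q ((m : ℝ) + 1) : ℝ) : ℂ) * fischerWeight q (n, m) := by
  simp only [fischerWeight, Nat.triangle_succ, qfactR_succ]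
  push_cast
  ring

lemma ip2_eq_sum (q : ℝ) (P Q : P2) :
    ip2 q P Q = P.sum fun p c => c * starRingEnd ℂ (Q p) * fischerWeight q p :=
  rfl

lemma ip2_sum_single (q : ℝ) (u : P2) (σ : ℕ × ℕ → ℕ × ℕ) (φ : ℕ × ℕ → ℂ → ℂ) (Q : P2) :
    ip2 q (u.sum fun p c => Finsupp.single (σ p) (φ p c)) Q =
      u.sum fun p c => φ p c * starRingEnd ℂ (Q (σ p)) * fischerWeight q (σ p) := by
  rw [ip2_eq_sum, Finsupp.sum_sum_index (fun _ => by simp) (fun _ _ _ => by ring)]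
  exact Finsupp.sum_congr fun p _ => Finsupp.sum_single_index (by simp)

lemma rx_eq_sum (q : ℝ) (u : P2) :
    rx q u = u.sum fun p c => Finsupp.single (p.1 + 1, p.2) (c * ((q ^ (2 * p.2) : ℝ) : ℂ)) := by
  simp only [rx, Finsupp.coe_lsum]
  refine Finsupp.sum_congr fun p _ => ?_
  simp only [LinearMap.toSpanSingleton_apply, mono, Finsupp.smul_single, smul_eq_mul, mul_one]

lemma ry_eq_sum (u : P2) : ry u = u.sum fun p c => Finsupp.single (p.1, p.2 + 1) c := by
  simp only [ry, Finsupp.coe_lsum]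
  refine Finsupp.sum_congr fun p _ => ?_
  rw [LinearMap.toSpanSingleton_apply, mono, Finsupp.smul_single_one]

lemma fg_apply (f g : P1) (a b : ℕ) : fg f g (a, b) = f.coeff a * g.coeff b := by
  simp only [fg, Finsupp.finsetSum_apply, Finsupp.sum, Finsupp.single_apply, Prod.mk.injEq, ite_and,
    Finset.sum_ite_irrel, Finset.sum_ite_eq', Finsupp.mem_support_iff, ne_eq, ite_not,
    Finset.sum_const_zero]
  split_ifs <;> simp [*]

lemma coeff_Dq (q : ℝ) (f : P1) (n : ℕ) :
    (Dq q f).coeff n = ((q ^ n * qnumR q ((n : ℝ) + 1) : ℝ) : ℂ) * f.coeff (n + 1) := by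
  simp only [Dq, LinearMap.comp_apply, LinearEquiv.coe_coe, AddMonoidAlgebra.coeffLinearEquiv_apply,
    Finsupp.coe_lsum, LinearMap.toSpanSingleton_apply, AddMonoidAlgebra.smul_single, smul_eq_mul,
    mul_one, AddMonoidAlgebra.coeff_finsuppSum, AddMonoidAlgebra.coeff_single, Finsupp.sum_apply]
  rw [Finsupp.sum_eq_single (n + 1)]
  · push_cast [Nat.add_sub_cancel, Finsupp.single_eq_same]
    ring
  · rintro (_ | m) - hm
    -- `0 - 1 = 0` in ℕ, so z^0 also contributes at index 0, but with the factor [0] = 0.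
    · simp [qnumR]
    · simp [show m ≠ n by omega]
  · simp

lemma coeff_scP (c : ℂ) (f : P1) (n : ℕ) : (scP c f).coeff n = c ^ n * f.coeff n := by
  simp only [scP, LinearMap.comp_apply, LinearEquiv.coe_coe, AddMonoidAlgebra.coeffLinearEquiv_apply,
    Finsupp.coe_lsum, LinearMap.toSpanSingleton_apply, AddMonoidAlgebra.smul_single, smul_eq_mul,
    mul_one, AddMonoidAlgebra.coeff_finsuppSum, AddMonoidAlgebra.coeff_single, Finsupp.sum_apply]
  rw [Finsupp.sum_eq_single n]
  · rw [Finsupp.single_eq_same, mul_comm]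
  · intro m _ hm
    simp [hm]
  · simp

theorem rx_ry_adjoints_general (q : ℝ)
    (u : P2) (f g : P1) :
    ip2 q (rx q u) (fg f g) = ip2 q u (fg (Dq q f) (scP (((q : ℂ)) ^ 2) g)) ∧
    ip2 q (ry u) (fg f g) = ip2 q u (fg f (Dq q g)) := by
  constructor
  · rw [rx_eq_sum, ip2_sum_single, ip2_eq_sum]
    refine Finsupp.sum_congr fun ⟨n, m⟩ _ => ?_
    simp only [fg_apply, coeff_Dq, coeff_scP, fischerWeight_succ_fst, map_mul, map_pow,
      Complex.conj_ofReal]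
    push_cast
    ring
  · rw [ry_eq_sum, ip2_sum_single, ip2_eq_sum]
    refine Finsupp.sum_congr fun ⟨n, m⟩ _ => ?_
    simp only [fg_apply, coeff_Dq, fischerWeight_succ_snd, map_mul, Complex.conj_ofReal]
    ring

/-- **Adjoints of the quantum-plane multiplication operators** (formula (5.7)):
r_x†(f⊗g) = D_{q²}f ⊗ T_{q²}g and r_y†(f⊗g) = f ⊗ D_{q²}g, i.e. for all u, f, g:
⟨r_x(u), f(x)g(y)⟩ = ⟨u, (D_{q²}f)(x)·g(q²y)⟩ and
⟨r_y(u), f(x)g(y)⟩ = ⟨u, f(x)·(D_{q²}g)(y)⟩. -/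
theorem rx_ry_adjoints (q : ℝ) (hq : 0 < q) (hq1 : q ≠ 1)
    (u : P2) (f g : P1) :
    ip2 q (rx q u) (fg f g) = ip2 q u (fg (Dq q f) (scP (((q : ℂ)) ^ 2) g)) ∧
    ip2 q (ry u) (fg f g) = ip2 q u (fg f (Dq q g)) :=
  rx_ry_adjoints_general q u f g
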